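/- Let G = (V_L, V_R, E) be a simple bipartite graph with minimum degree at least 2 and left and right average degrees d_L = |E|/|V_L| and d_R = |E|/|V_R|. If e⃗ is a uniformly chosen directed edge from V_L to V_R, then for every i ≥ 1, E[n_{2i+1}(e⃗)] ≥ (d_R-1)^{i+1}(d_L-1)^i. -/

import Mathlib

/-!
Weight a non-returning walk `w₀ w₁ … w_m` by `q(w) = ∏_{0<t<m} (deg w_t - 1)⁻¹`, the probability
that the non-backtracking random walk started along the edge `w₀w₁` follows `w`. The weights of
the walks starting in `V_L` add up to `|E|`, and under them the endpoint `w_t` is distributed like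
the head of a uniform directed edge, hence lies in `V_R` with weight `deg v` when `t` is odd and in
`V_L` when `t` is even. Jensen's inequality for `exp` gives
`#walks / |E| ≥ exp (E_q[log (1/q)]) = exp (∑_{0<t<m} E_q[log (deg w_t - 1)])`. For `m = 2i + 2`,
convexity of `x ↦ x log (x - 1)` on `[2, ∞)` bounds each of the `i + 1` odd terms below by
`log (d_R - 1)` and each of the `i` even ones by `log (d_L - 1)`.
-/
variable {V : Type*}

/-- \`w : Fin (i+1) → V\` is a non-returning walk of \`i\` edges in \`G\`. -/
def IsNR (G : SimpleGraph V) (i : ℕ) (w : Fin (i + 1) → V) : Prop :=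
  (∀ j : ℕ, ∀ _h : j < i, G.Adj (w ⟨j, by omega⟩) (w ⟨j + 1, by omega⟩)) ∧
  (∀ j : ℕ, ∀ _h : j + 2 ≤ i, w ⟨j, by omega⟩ ≠ w ⟨j + 2, by omega⟩)

/-- \`nE G i u v\` : the number of non-returning walks of \`i + 1\` edges whose
first edge is the directed edge \`(u, v)\`. -/
noncomputable def nE (G : SimpleGraph V) (i : ℕ) (u v : V) : ℕ :=
  Nat.card {w : Fin (i + 2) → V // IsNR G (i + 1) w ∧ w 0 = u ∧ w 1 = v}

open Finset Real SimpleGraph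

theorem monotoneOn_log_add_inv : MonotoneOn (fun y : ℝ => log y + y⁻¹) (Set.Ici 1) := by
  intro a ha b hb hab
  simp only [Set.mem_Ici] at ha hb
  have ha0 : 0 < a := by linarith
  have hlog : 1 - (b / a)⁻¹ ≤ log b - log a := by
    rw [← log_div (by positivity) (by positivity)]
    exact one_sub_inv_le_log_of_pos (by positivity)
  have hinv : a⁻¹ - b⁻¹ ≤ 1 - (b / a)⁻¹ := by
    rw [inv_div, show a⁻¹ - b⁻¹ = (b - a) / (a * b) by field_simp,
      show 1 - a / b = (b - a) / b by field_simp]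
    exact div_le_div_of_nonneg_left (by linarith) (by positivity) (by nlinarith)
  linarith

theorem convexOn_mul_log_sub_one : ConvexOn ℝ (Set.Ici 2) fun x : ℝ => x * log (x - 1) := by
  have hderiv : ∀ x : ℝ, 1 < x → HasDerivAt (fun x => x * log (x - 1))
      (log (x - 1) + (x - 1)⁻¹ + 1) x := by
    intro x hx
    have hx1 : x - 1 ≠ 0 := by linarith
    refine ((hasDerivAt_id' x).mul (((hasDerivAt_id' x).sub_const 1).log hx1)).congr_deriv ?_
    field_simp
    ring
  refine MonotoneOn.convexOn_of_deriv (convex_Ici 2) ?_ ?_ ?_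
  · exact fun x hx =>
      (hderiv x (by linarith [Set.mem_Ici.mp hx])).continuousAt.continuousWithinAt
  · rw [interior_Ici]
    exact fun x hx =>
      (hderiv x (by linarith [Set.mem_Ioi.mp hx])).differentiableAt.differentiableWithinAt
  · rw [interior_Ici]
    intro a ha b hb hab
    simp only [Set.mem_Ioi] at ha hb
    rw [(hderiv a (by linarith)).deriv, (hderiv b (by linarith)).deriv]
    have := monotoneOn_log_add_inv (a := a - 1) (b := b - 1)
      (Set.mem_Ici.mpr (by linarith)) (Set.mem_Ici.mpr (by linarith)) (by linarith)
    simp only at this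
    linarith

theorem sum_mul_log_div_card_sub_one_le {ι : Type*} (s : Finset ι) (f : ι → ℝ)
    (hf : ∀ x ∈ s, 2 ≤ f x) :
    (∑ x ∈ s, f x) * log ((∑ x ∈ s, f x) / #s - 1) ≤ ∑ x ∈ s, f x * log (f x - 1) := by
  rcases s.eq_empty_or_nonempty with rfl | hs
  · simp
  have hn : (0 : ℝ) < #s := by exact_mod_cast hs.card_pos
  have := convexOn_mul_log_sub_one.map_centerMass_le (t := s) (w := fun _ => 1) (p := f)
    (by simp) (by simpa using hn) hf
  simp only [centerMass, sum_const, nsmul_eq_mul, mul_one, smul_eq_mul, one_mul,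
    Function.comp_apply, ← div_eq_inv_mul] at this
  rwa [div_mul_eq_mul_div, div_le_div_iff_of_pos_right hn] at this

theorem two_le_sum_div_card {ι : Type*} {s : Finset ι} {f : ι → ℝ} (hf : ∀ x ∈ s, 2 ≤ f x)
    (hs : 0 < ∑ x ∈ s, f x) : 2 ≤ (∑ x ∈ s, f x) / #s := by
  have hne : s.Nonempty := nonempty_of_sum_ne_zero hs.ne'
  rw [le_div_iff₀ (by exact_mod_cast hne.card_pos), mul_comm]
  simpa using card_nsmul_le_sum s f 2 hf

theorem exp_sum_mul_div_le_card_div {ι : Type*} {s : Finset ι} {q l : ι → ℝ}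
    (hq : ∀ x ∈ s, 0 ≤ q x) (hs : 0 < ∑ x ∈ s, q x) (hql : ∀ x ∈ s, q x * exp (l x) = 1) :
    exp ((∑ x ∈ s, q x * l x) / ∑ x ∈ s, q x) ≤ #s / ∑ x ∈ s, q x := by
  have := convexOn_exp.map_centerMass_le hq hs fun x _ => Set.mem_univ (l x)
  simpa [centerMass, sum_congr rfl hql, div_eq_inv_mul] using this

theorem sum_range_two_mul_add_one_of_parity {M : Type*} [AddCommMonoid M] {c : ℕ → M} {a b : M}
    (heven : ∀ j, c (2 * j) = a) (hodd : ∀ j, c (2 * j + 1) = b) (i : ℕ) :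
    ∑ t ∈ range (2 * i + 1), c t = (i + 1) • a + i • b := by
  induction i with
  | zero => simp [heven 0]
  | succ i ih =>
    rw [show 2 * (i + 1) + 1 = 2 * i + 1 + 1 + 1 by ring, sum_range_succ, sum_range_succ, ih, hodd,
      show 2 * i + 1 + 1 = 2 * (i + 1) by ring, heven]
    simp only [add_nsmul, one_nsmul]
    abel

namespace IsNR

variable {G : SimpleGraph V}

theorem adj {m : ℕ} {w : Fin (m + 1) → V} (h : IsNR G m w) (j : Fin m) :
    G.Adj (w j.castSucc) (w j.succ) :=
  h.1 j j.isLt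

end IsNR

variable {G : SimpleGraph V}

theorem isNR_one_iff {w : Fin 2 → V} : IsNR G 1 w ↔ G.Adj (w 0) (w 1) := by
  refine ⟨fun h => h.adj 0, fun h => ⟨fun j hj => ?_, fun j hj => by omega⟩⟩
  obtain rfl : j = 0 := by omega
  exact h

theorem isNR_iff_init {k : ℕ} {w : Fin (k + 3) → V} :
    IsNR G (k + 2) w ↔ IsNR G (k + 1) (Fin.init w) ∧
      G.Adj (w (Fin.last (k + 1)).castSucc) (w (Fin.last (k + 2))) ∧
      w (Fin.last k).castSucc.castSucc ≠ w (Fin.last (k + 2)) := by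
  constructor
  · rintro ⟨hadj, hne⟩
    exact ⟨⟨fun j hj => hadj j (by omega), fun j hj => hne j (by omega)⟩,
      hadj (k + 1) (by omega), hne k (by omega)⟩
  · rintro ⟨⟨hadj, hne⟩, hadj', hne'⟩
    refine ⟨fun j hj => ?_, fun j hj => ?_⟩
    · obtain hj | rfl : j < k + 1 ∨ j = k + 1 := by omega
      exacts [hadj j hj, hadj']
    · obtain hj | rfl : j + 2 ≤ k + 1 ∨ j = k := by omega
      exacts [hne j hj, hne']

-- `Fin.succ 1` rather than `2`, so that `Fin.cons_succ` applies in `isNR_cons_iff`.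
theorem isNR_iff_tail {k : ℕ} {w : Fin (k + 3) → V} :
    IsNR G (k + 2) w ↔
      G.Adj (w 0) (w 1) ∧ w 0 ≠ w (Fin.succ 1) ∧ IsNR G (k + 1) (Fin.tail w) := by
  constructor
  · rintro ⟨hadj, hne⟩
    exact ⟨hadj 0 (by omega), hne 0 (by omega),
      fun j hj => hadj (j + 1) (by omega), fun j hj => hne (j + 1) (by omega)⟩
  · rintro ⟨hadj', hne', hadj, hne⟩
    refine ⟨fun j hj => ?_, fun j hj => ?_⟩
    · cases j with
      | zero => exact hadj'
      | succ j => exact hadj j (by omega)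
    · cases j with
      | zero => exact hne'
      | succ j => exact hne j (by omega)

theorem isNR_snoc_iff {k : ℕ} {w : Fin (k + 2) → V} {x : V} :
    IsNR G (k + 2) (Fin.snoc w x : Fin (k + 3) → V) ↔
      IsNR G (k + 1) w ∧ G.Adj (w (Fin.last (k + 1))) x ∧ w (Fin.last k).castSucc ≠ x := by
  simp [isNR_iff_init]

theorem isNR_cons_iff {k : ℕ} {w : Fin (k + 2) → V} {u : V} :
    IsNR G (k + 2) (Fin.cons u w : Fin (k + 3) → V) ↔
      G.Adj u (w 0) ∧ u ≠ w 1 ∧ IsNR G (k + 1) w := by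
  simp only [isNR_iff_tail, Fin.cons_zero, Fin.cons_one, Fin.cons_succ, Fin.tail_cons]

section Walks

variable [Fintype V] (G : SimpleGraph V)

open Classical in
noncomputable def walksFrom (S : Finset V) (m : ℕ) : Finset (Fin (m + 1) → V) :=
  {w | IsNR G m w ∧ w 0 ∈ S}

variable {G} {M : Type*} [AddCommMonoid M]

theorem mem_walksFrom {S : Finset V} {m : ℕ} {w : Fin (m + 1) → V} :
    w ∈ walksFrom G S m ↔ IsNR G m w ∧ w 0 ∈ S := by
  simp [walksFrom]

variable [DecidableRel G.Adj]

theorem sum_walksFrom_one (S : Finset V) (F : (Fin 2 → V) → M) :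
    ∑ w ∈ walksFrom G S 1, F w = ∑ u ∈ S, ∑ v ∈ G.neighborFinset u, F ![u, v] := by
  rw [sum_sigma']
  refine sum_nbij' (fun w => ⟨w 0, w 1⟩) (fun p => ![p.1, p.2]) ?_ ?_ ?_ ?_ ?_
  · simp +contextual [mem_walksFrom, isNR_one_iff]
  · simp +contextual [mem_walksFrom, isNR_one_iff]
  · intro w _
    ext j
    fin_cases j <;> rfl
  · simp
  · intro w _
    congr
    ext j
    fin_cases j <;> rfl

variable [DecidableEq V]

theorem sum_walksFrom_snoc (S : Finset V) (k : ℕ) (F : (Fin (k + 3) → V) → M) :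
    ∑ w ∈ walksFrom G S (k + 2), F w = ∑ w ∈ walksFrom G S (k + 1),
      ∑ x ∈ G.neighborFinset (w (Fin.last (k + 1))) \ {w (Fin.last k).castSucc},
        F (Fin.snoc w x) := by
  rw [sum_sigma']
  refine sum_nbij' (fun w => ⟨Fin.init w, w (Fin.last _)⟩) (fun p => Fin.snoc p.1 p.2)
    ?_ ?_ (fun w _ => Fin.snoc_init_self w) (fun p _ => by simp) (fun w _ => by simp)
  · intro w hw
    obtain ⟨w, x, rfl⟩ : ∃ w' x, w = Fin.snoc w' x := ⟨_, _, (Fin.snoc_init_self w).symm⟩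
    simp only [mem_walksFrom, isNR_snoc_iff, Fin.snoc_apply_zero] at hw
    obtain ⟨⟨hw, hadj, hne⟩, hS⟩ := hw
    simp only [Fin.init_snoc, Fin.snoc_last, mem_sigma, mem_walksFrom, mem_sdiff,
      mem_neighborFinset, mem_singleton]
    exact ⟨⟨hw, hS⟩, hadj, hne.symm⟩
  · rintro ⟨w, x⟩ hp
    simp only [mem_sigma, mem_walksFrom, mem_sdiff, mem_neighborFinset, mem_singleton] at hp
    obtain ⟨⟨hw, hS⟩, hadj, hne⟩ := hp
    simp only [mem_walksFrom, isNR_snoc_iff, Fin.snoc_apply_zero]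
    exact ⟨⟨hw, hadj, Ne.symm hne⟩, hS⟩

theorem sum_walksFrom_cons {A B : Finset V} (h : G.IsBipartiteWith A B) (k : ℕ)
    (F : (Fin (k + 3) → V) → M) :
    ∑ w ∈ walksFrom G A (k + 2), F w = ∑ w ∈ walksFrom G B (k + 1),
      ∑ u ∈ G.neighborFinset (w 0) \ {w 1}, F (Fin.cons u w) := by
  rw [sum_sigma']
  refine sum_nbij' (fun w => ⟨Fin.tail w, w 0⟩) (fun p => Fin.cons p.2 p.1)
    ?_ ?_ (fun w _ => Fin.cons_self_tail w) (fun p _ => by simp) (fun w _ => by simp)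
  · intro w hw
    obtain ⟨u, w, rfl⟩ : ∃ u w', w = Fin.cons u w' := ⟨_, _, (Fin.cons_self_tail w).symm⟩
    simp only [mem_walksFrom, isNR_cons_iff, Fin.cons_zero] at hw
    obtain ⟨⟨hadj, hne, hw⟩, hu⟩ := hw
    simp only [Fin.tail_cons, Fin.cons_zero, mem_sigma, mem_walksFrom, mem_sdiff,
      mem_neighborFinset, mem_singleton]
    exact ⟨⟨hw, h.mem_of_mem_adj hu hadj⟩, hadj.symm, hne⟩
  · rintro ⟨w, u⟩ hp
    simp only [mem_sigma, mem_walksFrom, mem_sdiff, mem_neighborFinset, mem_singleton] at hp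
    obtain ⟨⟨hw, hw0⟩, hadj, hne⟩ := hp
    simp only [mem_walksFrom, isNR_cons_iff, Fin.cons_zero]
    exact ⟨⟨hadj.symm, hne, hw⟩, h.mem_of_mem_adj' hw0 hadj.symm⟩

end Walks

section InteriorProd

variable {M : Type*} [CommMonoid M] (g : V → M)

@[to_additive]
def interiorProd {k : ℕ} (w : Fin (k + 2) → V) : M :=
  ∏ j : Fin k, g (w j.castSucc.succ)

@[to_additive]
theorem interiorProd_fin_two (w : Fin 2 → V) : interiorProd g w = 1 := by
  simp [interiorProd]

@[to_additive]
theorem interiorProd_eq_init_mul {k : ℕ} (w : Fin (k + 3) → V) :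
    interiorProd g w = interiorProd g (Fin.init w) * g (w (Fin.last (k + 1)).castSucc) := by
  simp only [interiorProd, Fin.prod_univ_castSucc, Fin.init, Fin.castSucc_succ]
  rfl

@[to_additive]
theorem interiorProd_eq_mul_tail {k : ℕ} (w : Fin (k + 3) → V) :
    interiorProd g w = g (w 1) * interiorProd g (Fin.tail w) := by
  simp [interiorProd, Fin.prod_univ_succ, Fin.tail]

end InteriorProd

section Weights

variable [Fintype V] (G : SimpleGraph V) [DecidableRel G.Adj]

noncomputable def walkWeight {k : ℕ} (w : Fin (k + 2) → V) : ℝ :=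
  interiorProd (fun v => ((G.degree v : ℝ) - 1)⁻¹) w

noncomputable def walkLogWeight {k : ℕ} (w : Fin (k + 2) → V) : ℝ :=
  interiorSum (fun v => log ((G.degree v : ℝ) - 1)) w

variable {G}

theorem walkWeight_nonneg (hdeg : ∀ v, 2 ≤ G.degree v) {k : ℕ} (w : Fin (k + 2) → V) :
    0 ≤ walkWeight G w := by
  unfold walkWeight interiorProd
  refine prod_nonneg fun j _ => inv_nonneg.mpr (sub_nonneg.mpr ?_)
  exact_mod_cast one_le_two.trans (hdeg _)

theorem walkWeight_mul_exp_walkLogWeight (hdeg : ∀ v, 2 ≤ G.degree v) {k : ℕ}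
    (w : Fin (k + 2) → V) : walkWeight G w * exp (walkLogWeight G w) = 1 := by
  rw [walkWeight, walkLogWeight, interiorProd, interiorSum, exp_sum, ← prod_mul_distrib]
  refine prod_eq_one fun j _ => ?_
  have : (1 : ℝ) < G.degree (w j.castSucc.succ) := by exact_mod_cast hdeg _
  rw [exp_log (by linarith), inv_mul_cancel₀ (by linarith)]

theorem walkWeight_snoc {k : ℕ} (w : Fin (k + 2) → V) (x : V) :
    walkWeight G (Fin.snoc w x : Fin (k + 3) → V) =
      walkWeight G w * ((G.degree (w (Fin.last (k + 1))) : ℝ) - 1)⁻¹ := by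
  rw [walkWeight, interiorProd_eq_init_mul, Fin.init_snoc, Fin.snoc_castSucc]
  rfl

theorem walkWeight_cons {k : ℕ} (u : V) (w : Fin (k + 2) → V) :
    walkWeight G (Fin.cons u w : Fin (k + 3) → V) =
      ((G.degree (w 0) : ℝ) - 1)⁻¹ * walkWeight G w := by
  rw [walkWeight, interiorProd_eq_mul_tail, Fin.tail_cons, Fin.cons_one]
  rfl

theorem sum_neighborFinset_sdiff_inv_degree_sub_one [DecidableEq V] {u v : V} (huv : G.Adj u v)
    (hv : G.degree v ≠ 1) :
    ∑ _x ∈ G.neighborFinset v \ {u}, ((G.degree v : ℝ) - 1)⁻¹ = 1 := by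
  have hu : u ∈ G.neighborFinset v := (G.mem_neighborFinset v u).mpr huv.symm
  have hpos : 1 ≤ G.degree v := (G.card_neighborFinset_eq_degree v) ▸ card_pos.mpr ⟨u, hu⟩
  rw [sum_const, card_sdiff_of_subset (singleton_subset_iff.mpr hu), card_singleton,
    card_neighborFinset_eq_degree, nsmul_eq_mul, Nat.cast_sub hpos, Nat.cast_one,
    mul_inv_cancel₀ (sub_ne_zero.mpr (by exact_mod_cast hv))]

end Weights

section Marginals

variable [Fintype V] {G : SimpleGraph V} [DecidableRel G.Adj]

theorem sum_sum_neighborFinset_eq_sum_degree_mul {A B : Finset V} (h : G.IsBipartiteWith A B)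
    (f : V → ℝ) : ∑ u ∈ A, ∑ v ∈ G.neighborFinset u, f v = ∑ v ∈ B, G.degree v * f v := by
  rw [sum_comm' (t' := B) (s' := fun v => G.neighborFinset v)]
  · simp [card_neighborFinset_eq_degree]
  · intro u v
    simp only [mem_neighborFinset]
    exact ⟨fun ⟨hu, huv⟩ => ⟨huv.symm, h.mem_of_mem_adj hu huv⟩,
      fun ⟨hvu, hv⟩ => ⟨h.mem_of_mem_adj' hv hvu.symm, hvu.symm⟩⟩

variable [DecidableEq V]

theorem sum_walkWeight_mul_init (hdeg : ∀ v, G.degree v ≠ 1) (S : Finset V) (k : ℕ)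
    (Φ : (Fin (k + 2) → V) → ℝ) :
    ∑ w ∈ walksFrom G S (k + 2), walkWeight G w * Φ (Fin.init w) =
      ∑ w ∈ walksFrom G S (k + 1), walkWeight G w * Φ w := by
  rw [sum_walksFrom_snoc]
  refine sum_congr rfl fun w hw => ?_
  have hadj := (mem_walksFrom.mp hw).1.adj (Fin.last k)
  rw [Fin.succ_last] at hadj
  simp only [walkWeight_snoc, Fin.init_snoc]
  rw [← sum_mul, ← mul_sum, sum_neighborFinset_sdiff_inv_degree_sub_one hadj (hdeg _), mul_one]

theorem sum_walkWeight_mul_tail (hdeg : ∀ v, G.degree v ≠ 1) {A B : Finset V}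
    (h : G.IsBipartiteWith A B) (k : ℕ) (Φ : (Fin (k + 2) → V) → ℝ) :
    ∑ w ∈ walksFrom G A (k + 2), walkWeight G w * Φ (Fin.tail w) =
      ∑ w ∈ walksFrom G B (k + 1), walkWeight G w * Φ w := by
  rw [sum_walksFrom_cons h]
  refine sum_congr rfl fun w hw => ?_
  have hadj := (mem_walksFrom.mp hw).1.adj 0
  rw [Fin.castSucc_zero, Fin.succ_zero_eq_one] at hadj
  simp only [walkWeight_cons, Fin.tail_cons]
  rw [← sum_mul, ← sum_mul, sum_neighborFinset_sdiff_inv_degree_sub_one hadj.symm (hdeg _),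
    one_mul]

theorem sum_walkWeight (hdeg : ∀ v, G.degree v ≠ 1) (S : Finset V) :
    ∀ k, ∑ w ∈ walksFrom G S (k + 1), walkWeight G w = ∑ u ∈ S, (G.degree u : ℝ)
  | 0 => by
    rw [sum_walksFrom_one]
    simp [walkWeight, interiorProd_fin_two, card_neighborFinset_eq_degree]
  | k + 1 => by
    rw [← sum_walkWeight hdeg S k]
    simpa using sum_walkWeight_mul_init hdeg S k fun _ => 1

theorem sum_walkWeight_mul_last_odd (hdeg : ∀ v, G.degree v ≠ 1) {A B : Finset V}
    (h : G.IsBipartiteWith A B) (f : V → ℝ) :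
    ∀ j, ∑ w ∈ walksFrom G A (2 * j + 1), walkWeight G w * f (w (Fin.last _)) =
      ∑ v ∈ B, G.degree v * f v
  | 0 => by
    simp [sum_walksFrom_one, walkWeight, interiorProd_fin_two,
      sum_sum_neighborFinset_eq_sum_degree_mul h]
  | j + 1 =>
    (sum_walkWeight_mul_tail hdeg h (2 * j + 1) fun w => f (w (Fin.last _))).trans
      ((sum_walkWeight_mul_tail hdeg h.symm (2 * j) fun w => f (w (Fin.last _))).trans
        (sum_walkWeight_mul_last_odd hdeg h f j))

theorem sum_walkWeight_mul_last_even (hdeg : ∀ v, G.degree v ≠ 1) {A B : Finset V}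
    (h : G.IsBipartiteWith A B) (f : V → ℝ) (j : ℕ) : ∑ w ∈ walksFrom G A (2 * j + 1 + 1), walkWeight G w * f (w (Fin.last _)) =
      ∑ v ∈ A, G.degree v * f v :=
  (sum_walkWeight_mul_tail hdeg h (2 * j) fun w => f (w (Fin.last _))).trans
    (sum_walkWeight_mul_last_odd hdeg h.symm f j)

end Marginals

section LogWeight

variable [Fintype V] [DecidableEq V] {G : SimpleGraph V} [DecidableRel G.Adj]

theorem sum_walkWeight_mul_walkLogWeight_succ (hdeg : ∀ v, G.degree v ≠ 1) (S : Finset V)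
    (k : ℕ) :
    ∑ w ∈ walksFrom G S (k + 2), walkWeight G w * walkLogWeight G w =
      ∑ w ∈ walksFrom G S (k + 1), walkWeight G w * walkLogWeight G w +
        ∑ w ∈ walksFrom G S (k + 1),
          walkWeight G w * log ((G.degree (w (Fin.last _)) : ℝ) - 1) := by
  have := sum_walkWeight_mul_init hdeg S k fun w =>
    walkLogWeight G w + log ((G.degree (w (Fin.last _)) : ℝ) - 1)
  simp only [mul_add, sum_add_distrib] at this
  rw [← this, ← sum_add_distrib]
  refine sum_congr rfl fun w _ => ?_
  rw [walkLogWeight, interiorSum_eq_init_add, mul_add]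
  rfl

theorem sum_walkWeight_mul_walkLogWeight_eq_sum_range (hdeg : ∀ v, G.degree v ≠ 1)
    (S : Finset V) :
    ∀ m : ℕ, ∑ w ∈ walksFrom G S (m + 1), walkWeight G w * walkLogWeight G w =
      ∑ t ∈ range m, ∑ w ∈ walksFrom G S (t + 1),
        walkWeight G w * log ((G.degree (w (Fin.last _)) : ℝ) - 1)
  | 0 => by simp [walkLogWeight, interiorSum_fin_two]
  | m + 1 => by
    rw [sum_walkWeight_mul_walkLogWeight_succ hdeg S m, sum_range_succ,
      sum_walkWeight_mul_walkLogWeight_eq_sum_range hdeg S m]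

theorem sum_walkWeight_mul_walkLogWeight (hdeg : ∀ v, G.degree v ≠ 1) {A B : Finset V}
    (h : G.IsBipartiteWith A B) (i : ℕ) :
    ∑ w ∈ walksFrom G A (2 * i + 1 + 1), walkWeight G w * walkLogWeight G w =
      (i + 1) * ∑ v ∈ B, G.degree v * log ((G.degree v : ℝ) - 1) +
        i * ∑ v ∈ A, G.degree v * log ((G.degree v : ℝ) - 1) := by
  set g : V → ℝ := fun v => log ((G.degree v : ℝ) - 1)
  rw [sum_walkWeight_mul_walkLogWeight_eq_sum_range hdeg A,
    sum_range_two_mul_add_one_of_parity (sum_walkWeight_mul_last_odd hdeg h g)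
      (sum_walkWeight_mul_last_even hdeg h g), nsmul_eq_mul, nsmul_eq_mul]
  push_cast
  rfl

end LogWeight

theorem card_walksFrom_eq_sum_nE [Fintype V] [DecidableEq V] {G : SimpleGraph V}
    [DecidableRel G.Adj] (S : Finset V) (k : ℕ) :
    #(walksFrom G S (k + 1)) = ∑ u ∈ S, ∑ v ∈ G.neighborFinset u, nE G k u v := by
  classical
  rw [card_eq_sum_card_fiberwise (f := fun w => (⟨w 0, w 1⟩ : Σ _ : V, V))
    (t := S.sigma fun u => G.neighborFinset u), sum_sigma]
  · refine sum_congr rfl fun u hu => sum_congr rfl fun v _ => ?_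
    rw [nE, Nat.card_eq_fintype_card, Fintype.card_subtype]
    congr 1
    ext w
    simp only [mem_filter, mem_walksFrom, mem_univ, true_and, Sigma.mk.injEq, heq_eq_eq]
    constructor
    · rintro ⟨⟨hw, -⟩, rfl, rfl⟩
      exact ⟨hw, rfl, rfl⟩
    · rintro ⟨hw, rfl, rfl⟩
      exact ⟨⟨hw, hu⟩, rfl, rfl⟩
  · intro w hw
    simpa [mem_walksFrom] using ⟨(mem_walksFrom.mp hw).2, (mem_walksFrom.mp hw).1.adj 0⟩

theorem card_edgeFinset_pos_of_minDegree_pos [Fintype V] [DecidableEq V] {G : SimpleGraph V}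
    [DecidableRel G.Adj] (h : 0 < G.minDegree) : 0 < #G.edgeFinset := by
  cases isEmpty_or_nonempty V
  · simp at h
  obtain ⟨v⟩ := ‹Nonempty V›
  obtain ⟨u, hvu⟩ := (G.degree_pos_iff_exists_adj v).mp (h.trans_le (G.minDegree_le_degree v))
  exact card_pos.mpr ⟨s(v, u), G.mem_edgeFinset.mpr hvu⟩

theorem pow_mul_pow_le_card_walksFrom_div [Fintype V] [DecidableEq V] {G : SimpleGraph V}
    [DecidableRel G.Adj] {A B : Finset V} (h : G.IsBipartiteWith A B)
    (hdeg : ∀ v, 2 ≤ G.degree v) {E : ℝ} (hE : 0 < E) (hA : ∑ v ∈ A, (G.degree v : ℝ) = E)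
    (hB : ∑ v ∈ B, (G.degree v : ℝ) = E) (i : ℕ) :
    (E / #B - 1) ^ (i + 1) * (E / #A - 1) ^ i ≤ #(walksFrom G A (2 * i + 1 + 1)) / E := by
  have hdeg' : ∀ v, 2 ≤ (G.degree v : ℝ) := fun v => by exact_mod_cast hdeg v
  have hdeg1 : ∀ v, G.degree v ≠ 1 := fun v => by have := hdeg v; omega
  have hlogA : E * log (E / #A - 1) ≤ ∑ v ∈ A, G.degree v * log ((G.degree v : ℝ) - 1) := by
    simpa only [hA] using sum_mul_log_div_card_sub_one_le A _ fun v _ => hdeg' v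
  have hlogB : E * log (E / #B - 1) ≤ ∑ v ∈ B, G.degree v * log ((G.degree v : ℝ) - 1) := by
    simpa only [hB] using sum_mul_log_div_card_sub_one_le B _ fun v _ => hdeg' v
  have hmass : ∑ w ∈ walksFrom G A (2 * i + 1 + 1), walkWeight G w = E :=
    (sum_walkWeight hdeg1 A _).trans hA
  have hjensen := exp_sum_mul_div_le_card_div (fun w _ => walkWeight_nonneg hdeg w)
    (hmass ▸ hE) fun w _ => walkWeight_mul_exp_walkLogWeight hdeg w
  rw [hmass, sum_walkWeight_mul_walkLogWeight hdeg1 h] at hjensen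
  refine le_trans ?_ hjensen
  have hA2 : 2 ≤ E / #A := by
    simpa only [hA] using two_le_sum_div_card (s := A) (fun v _ => hdeg' v) (by rwa [hA])
  have hB2 : 2 ≤ E / #B := by
    simpa only [hB] using two_le_sum_div_card (s := B) (fun v _ => hdeg' v) (by rwa [hB])
  have hA1 : 0 < (E / #A - 1) ^ i := pow_pos (by linarith) _
  have hB1 : 0 < (E / #B - 1) ^ (i + 1) := pow_pos (by linarith) _
  rw [← exp_log (mul_pos hB1 hA1), exp_le_exp, log_mul hB1.ne' hA1.ne', log_pow, log_pow,
    le_div_iff₀ hE]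
  push_cast
  nlinarith [mul_le_mul_of_nonneg_left hlogB (by positivity : (0 : ℝ) ≤ i + 1),
    mul_le_mul_of_nonneg_left hlogA (by positivity : (0 : ℝ) ≤ i)]

theorem hoory_lemma_a_general {V : Type*} [Fintype V] [DecidableEq V]
    (G : SimpleGraph V) [DecidableRel G.Adj] (L R : Finset V)
    (hpart : ∀ v : V, (v ∈ L ∧ v ∉ R) ∨ (v ∈ R ∧ v ∉ L))
    (hbip : ∀ u v : V, G.Adj u v → (u ∈ L ∧ v ∈ R) ∨ (u ∈ R ∧ v ∈ L))
    (hmin : 2 ≤ G.minDegree)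
    (dL dR : ℝ) (hdL : dL = (G.edgeFinset.card : ℝ) / (L.card : ℝ))
    (hdR : dR = (G.edgeFinset.card : ℝ) / (R.card : ℝ)) (i : ℕ) :
    (∑ u ∈ L, ∑ v ∈ G.neighborFinset u, (nE G (2 * i + 1) u v : ℝ)) /
        (G.edgeFinset.card : ℝ) ≥ (dR - 1) ^ (i + 1) * (dL - 1) ^ i := by
  have hG : G.IsBipartiteWith L R :=
    ⟨disjoint_coe.mpr (disjoint_left.mpr fun v hL hR => by rcases hpart v with h | h <;> tauto),
      fun u v huv => by simpa using hbip u v huv⟩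
  have hE : (0 : ℝ) < #G.edgeFinset := by
    exact_mod_cast card_edgeFinset_pos_of_minDegree_pos (by omega)
  have hcount : ∑ u ∈ L, ∑ v ∈ G.neighborFinset u, (nE G (2 * i + 1) u v : ℝ) =
      #(walksFrom G L (2 * i + 1 + 1)) := by
    rw [card_walksFrom_eq_sum_nE]
    push_cast
    rfl
  rw [hcount, ge_iff_le, hdL, hdR]
  exact pow_mul_pow_le_card_walksFrom_div hG (fun v => hmin.trans (G.minDegree_le_degree v)) hE
    (by exact_mod_cast isBipartiteWith_sum_degrees_eq_card_edges hG)
    (by exact_mod_cast isBipartiteWith_sum_degrees_eq_card_edges' hG) i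

theorem hoory_lemma_a {V : Type*} [Fintype V] [DecidableEq V]
    (G : SimpleGraph V) [DecidableRel G.Adj] (L R : Finset V)
    (hpart : ∀ v : V, (v ∈ L ∧ v ∉ R) ∨ (v ∈ R ∧ v ∉ L))
    (hbip : ∀ u v : V, G.Adj u v → (u ∈ L ∧ v ∈ R) ∨ (u ∈ R ∧ v ∈ L))
    (hmin : 2 ≤ G.minDegree)
    (dL dR : ℝ) (hdL : dL = (G.edgeFinset.card : ℝ) / (L.card : ℝ))
    (hdR : dR = (G.edgeFinset.card : ℝ) / (R.card : ℝ)) (i : ℕ) (hi : 1 ≤ i) :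
    (∑ u ∈ L, ∑ v ∈ G.neighborFinset u, (nE G (2 * i + 1) u v : ℝ)) /
        (G.edgeFinset.card : ℝ) ≥ (dR - 1) ^ (i + 1) * (dL - 1) ^ i :=
  hoory_lemma_a_general G L R hpart hbip hmin dL dR hdL hdR i
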